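/- (First Fundamental Theorem of FC for the m-fold sequential GFD of arbitrary order.) Let n, m ∈ ℕ and (κ,k) ∈ L_n. Then the m-fold sequential GFD in the Riemann–Liouville sense is a left inverse of the m-fold GFI on C_{-1}(0,∞): for every f ∈ C_{-1}(0,∞) and t > 0, (D^{<m>}_{(k)} I^{<m>}_{(κ)} f)(t) = f(t). -/

import Mathlib

noncomputable section

/-- Laplace convolution `(f*g)(t) = ∫_0^t f(t-τ) g(τ) dτ`. -/
def conv (f g : ℝ → ℝ) : ℝ → ℝ := fun t => ∫ τ in (0:ℝ)..t, f (t - τ) * g τ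

/-- The space `C_{-1}(0,∞)`: functions of the form `t^q f₁(t)` with `q > -1`,
`f₁` continuous on `[0,∞)`. -/
def Cm1 (f : ℝ → ℝ) : Prop :=
  ∃ q : ℝ, -1 < q ∧ ∃ f₁ : ℝ → ℝ, ContinuousOn f₁ (Set.Ici 0) ∧
    ∀ t : ℝ, 0 < t → f t = t ^ q * f₁ t

/-- The subspace `C_{-1,0}(0,∞)`: as above with `-1 < q < 0`. -/
def Cm10 (f : ℝ → ℝ) : Prop :=
  ∃ q : ℝ, -1 < q ∧ q < 0 ∧ ∃ f₁ : ℝ → ℝ, ContinuousOn f₁ (Set.Ici 0) ∧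
    ∀ t : ℝ, 0 < t → f t = t ^ q * f₁ t

/-- `h_p(t) = t^(p-1)/Γ(p)`. -/
def hker (p : ℝ) : ℝ → ℝ := fun t => t ^ (p - 1) / Real.Gamma p

/-- The Sonine kernel class `L_n`: `κ ∈ C_{-1}`, `k ∈ C_{-1,0}`, and
`(κ*k)(t) = h_n(t)` for all `t > 0`. -/
def SonineL (n : ℕ) (κ k : ℝ → ℝ) : Prop :=
  Cm1 κ ∧ Cm10 k ∧ ∀ t : ℝ, 0 < t → conv κ k t = hker n t

/-- The general fractional integral `(I_{(κ)} f)(t) = (κ*f)(t)`. -/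
def GFI (κ f : ℝ → ℝ) : ℝ → ℝ := conv κ f

/-- The general fractional derivative of Riemann–Liouville type
`(D_{(k)} f)(t) = (d^n/dt^n)(k*f)(t)`. -/
def GFD (n : ℕ) (k f : ℝ → ℝ) : ℝ → ℝ := iteratedDeriv n (conv k f)

/-- Convolution powers: `g^{<1>} = g`, `g^{<j+1>} = g * g^{<j>}` (and `g^{<0>} = 1`). -/
def convPow (g : ℝ → ℝ) : ℕ → ℝ → ℝ
  | 0 => fun _ => 1
  | 1 => g
  | (j + 2) => conv g (convPow g (j + 1))

/-!
On `(0,∞)` the Sonine condition `κ * k = h_n` and associativity give `k * (κ * g) = h_n * g`.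
Since `h_1 * g` is the primitive of `g` and `h_{j+1} = h_1 * h_j`, the fundamental theorem of
calculus yields `(d/dt)^n (h_n * g) = g`, i.e. `D_{(k)} (κ * g) = g`. As
`κ^{<m+2>} * f = κ * (κ^{<m+1>} * f)`, each application of `D_{(k)}` removes one factor `κ`.

All functions involved are continuous on `(0,∞)` and `O(t^q)` at `0` for some `q > -1`; by the
convergence of the Beta integral this class is closed under convolution, which makes every
integral above converge and justifies Fubini. Only values on `(0,∞)` matter, so identities are
stated as `EqOn _ _ (Ioi 0)`.
-/

open MeasureTheory Set Filter Topology
open scoped Convolution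

lemma conv_eq_setIntegral_Ioo (f g : ℝ → ℝ) {t : ℝ} (ht : 0 ≤ t) :
    conv f g t = ∫ τ in Ioo 0 t, f (t - τ) * g τ := by
  rw [conv, intervalIntegral.integral_of_le ht, integral_Ioc_eq_integral_Ioo]

lemma conv_congr {f f' g g' : ℝ → ℝ} (hf : EqOn f f' (Ioi 0)) (hg : EqOn g g' (Ioi 0)) :
    EqOn (conv f g) (conv f' g') (Ioi 0) := by
  intro t (ht : 0 < t)
  rw [conv_eq_setIntegral_Ioo _ _ ht.le, conv_eq_setIntegral_Ioo _ _ ht.le]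
  refine setIntegral_congr_fun measurableSet_Ioo fun τ hτ => ?_
  rw [hf (sub_pos.2 hτ.2), hg hτ.1]

lemma conv_comm (f g : ℝ → ℝ) : conv f g = conv g f := by
  funext t
  simpa [conv, mul_comm] using
    intervalIntegral.integral_comp_sub_left (fun τ => f τ * g (t - τ)) t (a := 0) (b := t)

lemma conv_eq_mul_integral_comp_mul (f g : ℝ → ℝ) (t : ℝ) :
    conv f g t = t * ∫ u in (0:ℝ)..1, f (t - t * u) * g (t * u) := by
  simpa [conv] using (intervalIntegral.smul_integral_comp_mul_left (fun τ => f (t - τ) * g τ) t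
    (a := 0) (b := 1)).symm

lemma intervalIntegrable_of_comp_mul {φ : ℝ → ℝ} {t : ℝ} (ht : t ≠ 0)
    (h : IntervalIntegrable (fun u => φ (t * u)) volume 0 1) :
    IntervalIntegrable φ volume 0 t := by
  simpa [ht] using h.comp_mul_left (c := t⁻¹)

lemma indicator_Ioi_mul_indicator_Ioi_sub (f g : ℝ → ℝ) (t s : ℝ) :
    (Ioi 0).indicator f s * (Ioi 0).indicator g (t - s) =
      (Ioo 0 t).indicator (fun s => f s * g (t - s)) s := by
  by_cases hs : 0 < s <;> by_cases hst : s < t <;>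
    simp [indicator, hs, hst, sub_pos]

lemma norm_indicator_Ioi (f : ℝ → ℝ) :
    (fun t => ‖(Ioi 0).indicator f t‖) = (Ioi 0).indicator (fun t => |f t|) :=
  funext fun t => norm_indicator_eq_indicator_norm f t

lemma convolution_indicator_Ioi (f g : ℝ → ℝ) :
    (Ioi 0).indicator f ⋆[ContinuousLinearMap.mul ℝ ℝ] (Ioi 0).indicator g =
      (Ioi 0).indicator (conv g f) := by
  funext t
  simp only [convolution_def, ContinuousLinearMap.mul_apply', indicator_Ioi_mul_indicator_Ioi_sub,
    integral_indicator measurableSet_Ioo]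
  rcases le_or_gt t 0 with ht | ht
  · simp [Ioo_eq_empty_of_le ht, indicator_of_notMem (show t ∉ Ioi 0 from not_lt.2 ht)]
  · rw [indicator_of_mem (show t ∈ Ioi 0 from ht), conv_eq_setIntegral_Ioo _ _ ht.le]
    simp only [mul_comm]

lemma intervalIntegrable_one_sub_rpow_mul_rpow {a b : ℝ} (ha : -1 < a) (hb : -1 < b) :
    IntervalIntegrable (fun u : ℝ => (1 - u) ^ a * u ^ b) volume 0 1 := by
  have h := (Complex.betaIntegral_convergent (u := b + 1) (v := a + 1)
    (by simpa using by linarith) (by simpa using by linarith)).norm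
  rw [intervalIntegrable_iff_integrableOn_Ioo_of_le zero_le_one] at h ⊢
  refine h.congr_fun (fun u hu => ?_) measurableSet_Ioo
  have h1u : 0 < 1 - u := sub_pos.2 hu.2
  simp only [norm_mul, ← Complex.ofReal_one, ← Complex.ofReal_sub,
    Complex.norm_cpow_eq_rpow_re_of_pos hu.1, Complex.norm_cpow_eq_rpow_re_of_pos h1u]
  simp [mul_comm]

lemma continuousOn_rpow_const_Ioi (p : ℝ) : ContinuousOn (fun t : ℝ => t ^ p) (Ioi 0) :=
  continuousOn_id.rpow_const fun _ ht => Or.inl (ne_of_gt ht)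

/-- A weakening of `Cm1` with exponent `q`: the continuous factor is replaced by a local bound,
which makes the class closed under `conv`. -/
structure PowerBounded (f : ℝ → ℝ) (q : ℝ) : Prop where
  continuousOn : ContinuousOn f (Ioi 0)
  neg_one_lt : -1 < q
  bound : ∀ T, 0 < T → ∃ C, 0 ≤ C ∧ ∀ t ∈ Ioc 0 T, |f t| ≤ C * t ^ q

lemma Cm1.exists_powerBounded {f : ℝ → ℝ} (hf : Cm1 f) : ∃ q, PowerBounded f q := by
  obtain ⟨q, hq, f₁, hf₁, hf_eq⟩ := hf
  refine ⟨q, ⟨?_, hq, fun T hT => ?_⟩⟩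
  · exact ((continuousOn_rpow_const_Ioi q).mul (hf₁.mono Ioi_subset_Ici_self)).congr
      fun t ht => hf_eq t ht
  · obtain ⟨C, hC⟩ := (isCompact_Icc (a := 0) (b := T)).exists_bound_of_continuousOn
      (hf₁.mono Icc_subset_Ici_self)
    refine ⟨C, (norm_nonneg _).trans (hC 0 ⟨le_rfl, hT.le⟩), fun t ht => ?_⟩
    rw [hf_eq t ht.1, abs_mul, abs_of_pos (Real.rpow_pos_of_pos ht.1 q), mul_comm]
    exact mul_le_mul_of_nonneg_right (hC t (Ioc_subset_Icc_self ht)) (Real.rpow_nonneg ht.1.le q)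

lemma Cm10.cm1 {f : ℝ → ℝ} (hf : Cm10 f) : Cm1 f :=
  let ⟨q, hq, _, f₁, hf₁, hf_eq⟩ := hf
  ⟨q, hq, f₁, hf₁, hf_eq⟩

lemma powerBounded_hker {p : ℝ} (hp : 0 < p) : PowerBounded (hker p) (p - 1) := by
  have hΓ := Real.Gamma_pos_of_pos hp
  refine ⟨(continuousOn_rpow_const_Ioi _).div_const _, by linarith,
    fun T _ => ⟨(Real.Gamma p)⁻¹, inv_nonneg.2 hΓ.le, fun t ht => ?_⟩⟩
  rw [hker, abs_div, abs_of_nonneg (Real.rpow_nonneg ht.1.le _), abs_of_pos hΓ, div_eq_inv_mul]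

lemma hker_one : hker 1 = fun _ => 1 := by
  funext t
  simp [hker]

lemma conv_hker_one (g : ℝ → ℝ) : conv (hker 1) g = fun x => ∫ s in (0:ℝ)..x, g s := by
  funext x
  simp [conv, hker_one]

lemma conv_hker_one_hker {p : ℝ} (hp : 0 < p) : conv (hker 1) (hker p) = hker (p + 1) := by
  funext x
  rw [conv_hker_one]
  simp only [hker]
  rw [intervalIntegral.integral_div, integral_rpow (Or.inl (by linarith)), sub_add_cancel,
    Real.zero_rpow hp.ne', sub_zero, add_sub_cancel_right, Real.Gamma_add_one hp.ne']
  field_simp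

namespace PowerBounded

variable {f g : ℝ → ℝ} {q r : ℝ}

lemma abs (hf : PowerBounded f q) : PowerBounded (fun t => |f t|) q :=
  ⟨continuous_abs.comp_continuousOn hf.continuousOn, hf.neg_one_lt,
    fun T hT => by simpa only [abs_abs] using hf.bound T hT⟩

lemma continuousAt (hf : PowerBounded f q) {t : ℝ} (ht : 0 < t) : ContinuousAt f t :=
  hf.continuousOn.continuousAt (Ioi_mem_nhds ht)

lemma intervalIntegrable (hf : PowerBounded f q) {t : ℝ} (ht : 0 < t) :
    IntervalIntegrable f volume 0 t := by
  obtain ⟨C, -, hC⟩ := hf.bound t ht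
  have hdom : IntervalIntegrable (fun s => C * s ^ q) volume 0 t :=
    (intervalIntegral.intervalIntegrable_rpow' hf.neg_one_lt).const_mul C
  rw [intervalIntegrable_iff_integrableOn_Ioo_of_le ht.le] at hdom ⊢
  refine hdom.mono' ((hf.continuousOn.mono Ioo_subset_Ioi_self).aestronglyMeasurable
    measurableSet_Ioo) ?_
  filter_upwards [ae_restrict_mem measurableSet_Ioo] with s hs
  exact hC s (Ioo_subset_Ioc_self hs)

lemma hasDerivAt_integral (hf : PowerBounded f q) {t : ℝ} (ht : 0 < t) :
    HasDerivAt (fun x => ∫ s in (0:ℝ)..x, f s) (f t) t :=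
  intervalIntegral.integral_hasDerivAt_right (hf.intervalIntegrable ht)
    (hf.continuousOn.stronglyMeasurableAtFilter isOpen_Ioi t ht) (hf.continuousAt ht)

lemma aestronglyMeasurable_indicator (hf : PowerBounded f q) :
    AEStronglyMeasurable ((Ioi 0).indicator f) volume :=
  (aestronglyMeasurable_indicator_iff measurableSet_Ioi).2
    (hf.continuousOn.aestronglyMeasurable measurableSet_Ioi)

lemma abs_conv_integrand_le (hf : PowerBounded f q) (hg : PowerBounded g r) {T : ℝ}
    (hT : 0 < T) : ∃ C, 0 ≤ C ∧ ∀ t ∈ Ioc 0 T, ∀ u ∈ Ioo (0:ℝ) 1,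
      |f (t - t * u) * g (t * u)| ≤ C * t ^ (q + r) * ((1 - u) ^ q * u ^ r) := by
  obtain ⟨Cf, hCf, hf_le⟩ := hf.bound T hT
  obtain ⟨Cg, hCg, hg_le⟩ := hg.bound T hT
  refine ⟨Cf * Cg, mul_nonneg hCf hCg, fun t ⟨ht, htT⟩ u ⟨hu, hu1⟩ => ?_⟩
  have h1u : 0 < 1 - u := sub_pos.2 hu1
  have hfu : |f (t - t * u)| ≤ Cf * t ^ q * (1 - u) ^ q := by
    rw [show t - t * u = t * (1 - u) by ring]
    have := hf_le (t * (1 - u)) ⟨mul_pos ht h1u, by nlinarith⟩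
    rwa [Real.mul_rpow ht.le h1u.le, ← mul_assoc] at this
  have hgu : |g (t * u)| ≤ Cg * t ^ r * u ^ r := by
    have := hg_le (t * u) ⟨mul_pos ht hu, by nlinarith⟩
    rwa [Real.mul_rpow ht.le hu.le, ← mul_assoc] at this
  rw [abs_mul, Real.rpow_add ht]
  calc |f (t - t * u)| * |g (t * u)| ≤ (Cf * t ^ q * (1 - u) ^ q) * (Cg * t ^ r * u ^ r) :=
        mul_le_mul hfu hgu (abs_nonneg _) (hfu.trans' (abs_nonneg _))
    _ = Cf * Cg * (t ^ q * t ^ r) * ((1 - u) ^ q * u ^ r) := by ring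

lemma continuousAt_conv_integrand (hf : PowerBounded f q) (hg : PowerBounded g r) {t u : ℝ}
    (ht : 0 < t) (hu : u ∈ Ioo (0:ℝ) 1) :
    ContinuousAt (fun p : ℝ × ℝ => f (p.1 - p.1 * p.2) * g (p.1 * p.2)) (t, u) := by
  have h1 : ContinuousAt f (t - t * u) := hf.continuousAt (by nlinarith [hu.2])
  have h2 : ContinuousAt g (t * u) := hg.continuousAt (mul_pos ht hu.1)
  exact (h1.comp (f := fun p : ℝ × ℝ => p.1 - p.1 * p.2) (by fun_prop)).mul
    (h2.comp (f := fun p : ℝ × ℝ => p.1 * p.2) (by fun_prop))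

lemma intervalIntegrable_conv_integrand_comp_mul (hf : PowerBounded f q)
    (hg : PowerBounded g r) {t : ℝ} (ht : 0 < t) :
    IntervalIntegrable (fun u => f (t - t * u) * g (t * u)) volume 0 1 := by
  obtain ⟨C, -, hC⟩ := hf.abs_conv_integrand_le hg ht
  have hdom := (intervalIntegrable_one_sub_rpow_mul_rpow hf.neg_one_lt hg.neg_one_lt).const_mul
    (C * t ^ (q + r))
  rw [intervalIntegrable_iff_integrableOn_Ioo_of_le zero_le_one] at hdom ⊢
  refine hdom.mono' (ContinuousOn.aestronglyMeasurable (fun u hu => ?_) measurableSet_Ioo) ?_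
  · exact ((hf.continuousAt_conv_integrand hg ht hu).comp
      (f := fun u => (t, u)) (by fun_prop)).continuousWithinAt
  · filter_upwards [ae_restrict_mem measurableSet_Ioo] with u hu
    exact hC t ⟨ht, le_rfl⟩ u hu

lemma intervalIntegrable_conv_integrand (hf : PowerBounded f q) (hg : PowerBounded g r) {t : ℝ}
    (ht : 0 < t) : IntervalIntegrable (fun τ => f (t - τ) * g τ) volume 0 t :=
  intervalIntegrable_of_comp_mul ht.ne' (hf.intervalIntegrable_conv_integrand_comp_mul hg ht)

lemma convolutionExistsAt_indicator (hf : PowerBounded f q) (hg : PowerBounded g r) (t : ℝ) :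
    ConvolutionExistsAt ((Ioi 0).indicator f) ((Ioi 0).indicator g) t
      (ContinuousLinearMap.mul ℝ ℝ) := by
  simp only [ConvolutionExistsAt, ContinuousLinearMap.mul_apply',
    indicator_Ioi_mul_indicator_Ioi_sub, integrable_indicator_iff measurableSet_Ioo]
  rcases le_or_gt t 0 with ht | ht
  · simp [Ioo_eq_empty_of_le ht]
  · have h := hg.intervalIntegrable_conv_integrand hf ht
    rw [intervalIntegrable_iff_integrableOn_Ioo_of_le ht.le] at h
    simpa only [mul_comm] using h

lemma continuousOn_conv (hf : PowerBounded f q) (hg : PowerBounded g r) :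
    ContinuousOn (conv f g) (Ioi 0) := by
  intro t₀ (ht₀ : 0 < t₀)
  obtain ⟨C, hC0, hC⟩ := hf.abs_conv_integrand_le hg (T := 2 * t₀) (by linarith)
  obtain ⟨K, hK⟩ := (isCompact_Icc (a := t₀ / 2) (b := 2 * t₀)).exists_bound_of_continuousOn
    ((continuousOn_rpow_const_Ioi (q + r)).mono fun t ht => (half_pos ht₀).trans_le ht.1)
  rw [show conv f g = _ from funext (conv_eq_mul_integral_comp_mul f g)]
  refine (continuousAt_id.mul (intervalIntegral.continuousAt_of_dominated_interval
    (bound := fun u => C * K * ((1 - u) ^ q * u ^ r)) ?_ ?_ ?_ ?_)).continuousWithinAt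
  · filter_upwards [Ioi_mem_nhds ht₀] with t ht
    exact (hf.intervalIntegrable_conv_integrand_comp_mul hg ht).def'.aestronglyMeasurable
  · filter_upwards [Icc_mem_nhds (half_lt_self ht₀) (by linarith : t₀ < 2 * t₀)] with t ht
    filter_upwards [Measure.ae_ne volume 1] with u hu1 hu
    rw [uIoc_of_le zero_le_one] at hu
    have hu' : u ∈ Ioo (0:ℝ) 1 := ⟨hu.1, lt_of_le_of_ne hu.2 hu1⟩
    have hβ : 0 ≤ (1 - u) ^ q * u ^ r :=
      mul_nonneg (Real.rpow_nonneg (by linarith [hu'.2]) _) (Real.rpow_nonneg hu'.1.le _)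
    calc ‖f (t - t * u) * g (t * u)‖ ≤ C * t ^ (q + r) * ((1 - u) ^ q * u ^ r) :=
          hC t ⟨by linarith [ht.1], ht.2⟩ u hu'
      _ ≤ C * K * ((1 - u) ^ q * u ^ r) := by
          gcongr
          exact (le_abs_self _).trans (hK t ht)
  · exact (intervalIntegrable_one_sub_rpow_mul_rpow hf.neg_one_lt hg.neg_one_lt).const_mul _
  · filter_upwards [Measure.ae_ne volume 1] with u hu1 hu
    rw [uIoc_of_le zero_le_one] at hu
    exact (hf.continuousAt_conv_integrand hg ht₀ ⟨hu.1, lt_of_le_of_ne hu.2 hu1⟩).comp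
      (f := fun t => (t, u)) (by fun_prop)

lemma conv (hf : PowerBounded f q) (hg : PowerBounded g r) :
    PowerBounded (conv f g) (q + r + 1) := by
  refine ⟨hf.continuousOn_conv hg, by linarith [hf.neg_one_lt, hg.neg_one_lt], fun T hT => ?_⟩
  obtain ⟨C, hC0, hC⟩ := hf.abs_conv_integrand_le hg hT
  have hβ := intervalIntegrable_one_sub_rpow_mul_rpow hf.neg_one_lt hg.neg_one_lt
  set B := ∫ u in (0:ℝ)..1, (1 - u) ^ q * u ^ r
  have hB : 0 ≤ B := intervalIntegral.integral_nonneg zero_le_one fun u hu =>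
    mul_nonneg (Real.rpow_nonneg (by linarith [hu.2]) _) (Real.rpow_nonneg hu.1 _)
  refine ⟨C * B, mul_nonneg hC0 hB, fun t ht => ?_⟩
  have hint : ‖∫ u in (0:ℝ)..1, f (t - t * u) * g (t * u)‖ ≤ C * t ^ (q + r) * B := by
    rw [← intervalIntegral.integral_const_mul]
    refine intervalIntegral.norm_integral_le_of_norm_le zero_le_one ?_ (hβ.const_mul _)
    filter_upwards [Measure.ae_ne volume 1] with u hu1 hu
    exact hC t ht u ⟨hu.1, lt_of_le_of_ne hu.2 hu1⟩
  rw [conv_eq_mul_integral_comp_mul, abs_mul, abs_of_pos ht.1, Real.rpow_add ht.1 (q + r) 1,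
    Real.rpow_one]
  calc t * |∫ u in (0:ℝ)..1, f (t - t * u) * g (t * u)| ≤ t * (C * t ^ (q + r) * B) :=
        mul_le_mul_of_nonneg_left hint ht.1.le
    _ = C * B * (t ^ (q + r) * t) := by ring

lemma convPow (hf : PowerBounded f q) (m : ℕ) :
    PowerBounded (convPow f (m + 1)) ((m + 1) * (q + 1) - 1) := by
  induction m with
  | zero =>
    rw [show ((0 : ℕ) + 1 : ℝ) * (q + 1) - 1 = q by ring]
    exact hf
  | succ m ih =>
    rw [show ((m + 1 : ℕ) + 1 : ℝ) * (q + 1) - 1 = q + ((m + 1) * (q + 1) - 1) + 1 by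
      push_cast; ring]
    exact hf.conv ih

end PowerBounded

lemma conv_assoc {a b c : ℝ → ℝ} {qa qb qc : ℝ} (ha : PowerBounded a qa)
    (hb : PowerBounded b qb) (hc : PowerBounded c qc) :
    EqOn (conv a (conv b c)) (conv (conv a b) c) (Ioi 0) := by
  intro t ht
  have key := convolution_assoc (x₀ := t) (ContinuousLinearMap.mul ℝ ℝ)
    (ContinuousLinearMap.mul ℝ ℝ) (ContinuousLinearMap.mul ℝ ℝ) (ContinuousLinearMap.mul ℝ ℝ)
    (fun x y z => mul_assoc x y z) hc.aestronglyMeasurable_indicator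
    hb.aestronglyMeasurable_indicator ha.aestronglyMeasurable_indicator
    (Eventually.of_forall (hc.convolutionExistsAt_indicator hb))
    (Eventually.of_forall (by
      simpa only [norm_indicator_Ioi] using hb.abs.convolutionExistsAt_indicator ha.abs))
    (by simpa only [norm_indicator_Ioi, convolution_indicator_Ioi] using
      hc.abs.convolutionExistsAt_indicator (ha.abs.conv hb.abs) t)
  simpa only [convolution_indicator_Ioi, indicator_of_mem ht] using key

lemma iteratedDeriv_conv_hker {g : ℝ → ℝ} {q : ℝ} (hg : PowerBounded g q) {n : ℕ}
    (hn : 0 < n) : EqOn (iteratedDeriv n (conv (hker n) g)) g (Ioi 0) := by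
  induction n, hn using Nat.le_induction with
  | base =>
    intro t ht
    simpa [conv_hker_one] using (hg.hasDerivAt_integral ht).deriv
  | succ n hn ih =>
    have hp : (0:ℝ) < n := by exact_mod_cast hn
    have hF := (powerBounded_hker hp).conv hg
    have hprim : EqOn (conv (hker (n + 1 : ℕ)) g)
        (fun x => ∫ s in (0:ℝ)..x, conv (hker n) g s) (Ioi 0) := by
      rw [Nat.cast_succ, ← conv_hker_one_hker hp, ← conv_hker_one]
      exact (conv_assoc (powerBounded_hker one_pos) (powerBounded_hker hp) hg).symm
    have hderiv : EqOn (deriv (conv (hker (n + 1 : ℕ)) g)) (conv (hker n) g) (Ioi 0) :=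
      fun t ht => ((hprim.eventuallyEq_of_mem (Ioi_mem_nhds ht)).deriv_eq).trans
        (hF.hasDerivAt_integral ht).deriv
    intro t ht
    rw [iteratedDeriv_succ', hderiv.iteratedDeriv_of_isOpen isOpen_Ioi n ht]
    exact ih ht

lemma GFD_congr (n : ℕ) (k : ℝ → ℝ) {F G : ℝ → ℝ} (h : EqOn F G (Ioi 0)) :
    EqOn (GFD n k F) (GFD n k G) (Ioi 0) :=
  (conv_congr (eqOn_refl k _) h).iteratedDeriv_of_isOpen isOpen_Ioi n

lemma iterate_GFD_congr (n : ℕ) (k : ℝ → ℝ) (m : ℕ) {F G : ℝ → ℝ} (h : EqOn F G (Ioi 0)) :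
    EqOn ((GFD n k)^[m] F) ((GFD n k)^[m] G) (Ioi 0) := by
  induction m generalizing F G with
  | zero => exact h
  | succ m ih => exact ih (GFD_congr n k h)

namespace SonineL

variable {n : ℕ} {κ k g : ℝ → ℝ} {q : ℝ}

lemma GFD_conv (hκk : SonineL n κ k) (hn : 0 < n) (hg : PowerBounded g q) :
    EqOn (GFD n k (conv κ g)) g (Ioi 0) := by
  obtain ⟨qκ, hκ⟩ := hκk.1.exists_powerBounded
  obtain ⟨qk, hk⟩ := hκk.2.1.cm1.exists_powerBounded
  have hkernel : EqOn (conv k κ) (hker n) (Ioi 0) := by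
    rw [conv_comm]
    exact fun t ht => hκk.2.2 t ht
  have hconv : EqOn (conv k (conv κ g)) (conv (hker n) g) (Ioi 0) :=
    (conv_assoc hk hκ hg).trans (conv_congr hkernel (eqOn_refl g _))
  exact (hconv.iteratedDeriv_of_isOpen isOpen_Ioi n).trans (iteratedDeriv_conv_hker hg hn)

lemma iterate_GFD_conv_convPow (hκk : SonineL n κ k) (hn : 0 < n) (hg : PowerBounded g q)
    (m : ℕ) : EqOn ((GFD n k)^[m + 1] (conv (convPow κ (m + 1)) g)) g (Ioi 0) := by
  obtain ⟨qκ, hκ⟩ := hκk.1.exists_powerBounded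
  induction m with
  | zero => exact hκk.GFD_conv hn hg
  | succ m ih =>
    have hstep : EqOn (GFD n k (conv (convPow κ (m + 2)) g)) (conv (convPow κ (m + 1)) g)
        (Ioi 0) :=
      (GFD_congr n k (conv_assoc hκ (hκ.convPow m) hg).symm).trans
        (hκk.GFD_conv hn ((hκ.convPow m).conv hg))
    exact (iterate_GFD_congr n k (m + 1) hstep).trans ih

end SonineL

/-- 1st Fundamental Theorem of FC for the m-fold sequential GFD:
the `m`-fold sequential GFD `D^{<m>}_{(k)} = D_{(k)}∘⋯∘D_{(k)}` is a left
inverse of the `m`-fold GFI `I^{<m>}_{(κ)} f = κ^{<m>} * f` on `C_{-1}(0,∞)`. -/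
theorem seq_GFD_left_inverse_mfold_GFI (n m : ℕ) (hn : 0 < n) (hm : 0 < m)
    (κ k : ℝ → ℝ) (hκk : SonineL n κ k) (f : ℝ → ℝ) (hf : Cm1 f) :
    ∀ t : ℝ, 0 < t → (GFD n k)^[m] (conv (convPow κ m) f) t = f t := by
  obtain ⟨q, hfq⟩ := hf.exists_powerBounded
  obtain ⟨m, rfl⟩ : ∃ m', m = m' + 1 := ⟨m - 1, by omega⟩
  exact fun t ht => hκk.iterate_GFD_conv_convPow hn hfq m ht
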